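/- arXiv:2308.01459 — 8 statements merged into one kernel-verified Lean document; each statement's English description precedes it below -/
import Mathlib

section
/- Let M be an additive submonoid of ℤ² that is rationally supported. If M has infinitely many atoms, then M is atomic, i.e., every non-invertible element of M is a finite sum of atoms. -/
/-!
A unimodular change of coordinates puts `M` in the half-plane `x.1 ≥ 0`. If `M` meets the line
`x.1 = 0` in a group, that group is the set of units and induction on `x.1` shows that `M` is
atomic. Otherwise, up to a reflection, the line part of `M` is a nonzero submonoid of `{0} × ℕ`
containing some `(0, q)`, `M` is reduced, and the line part is atomic. Let `c` be least such that
some nonzero `(c, y) ∈ M` is not a sum of atoms. Any splitting of it into nonunits must peel off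
an element of the line, so such `y` are unbounded below, and by pigeonhole modulo `q` the column
`x.1 = c` of `M` contains a whole class `y₀ + qℤ`. Then `M ∪ -M` contains `N • ℤ²` for
`N = q²c`, so distinct atoms are never congruent modulo `N`, and `M` has at most `N²` atoms.
-/

/-- An element of ℤ² invertible within the submonoid M. -/
def IsUnitIn (M : AddSubmonoid (ℤ × ℤ)) (x : ℤ × ℤ) : Prop :=
  x ∈ M ∧ -x ∈ M

/-- An atom of the submonoid M of ℤ². -/
def IsAtomIn (M : AddSubmonoid (ℤ × ℤ)) (a : ℤ × ℤ) : Prop :=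
  a ∈ M ∧ ¬ IsUnitIn M a ∧
    ∀ r s : ℤ × ℤ, r ∈ M → s ∈ M → a = r + s → IsUnitIn M r ∨ IsUnitIn M s

/-- The submonoid generated by the atoms of M. -/
def AtomicElems (M : AddSubmonoid (ℤ × ℤ)) : AddSubmonoid (ℤ × ℤ) :=
  AddSubmonoid.closure {a : ℤ × ℤ | IsAtomIn M a}

/-- M is atomic: every non-invertible element is a sum of atoms. -/
def IsAtomicMonoid (M : AddSubmonoid (ℤ × ℤ)) : Prop :=
  ∀ x ∈ M, ¬ IsUnitIn M x → x ∈ AtomicElems M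

/-- M is rationally supported. -/
def RationallySupported (M : AddSubmonoid (ℤ × ℤ)) : Prop :=
  ∃ a b : ℤ, (a ≠ 0 ∨ b ≠ 0) ∧ ∀ x ∈ M, 0 ≤ a * x.1 + b * x.2

lemma AddSubmonoid.zsmul_mem_of_nonneg {G : Type*} [AddGroup G] (M : AddSubmonoid G) {x : G}
    (hx : x ∈ M) {k : ℤ} (hk : 0 ≤ k) : k • x ∈ M := by
  lift k to ℕ using hk
  rw [natCast_zsmul]
  exact nsmul_mem hx k

lemma AddSubmonoid.neg_mem_of_mul_neg {L : AddSubmonoid ℤ} {y z : ℤ} (hy : y ∈ L) (hz : z ∈ L)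
    (hyz : y * z < 0) : -y ∈ L := by
  have hz0 : z ≠ 0 := by rintro rfl; simp at hyz
  have key : -y = y.natAbs • z + (z.natAbs - 1) • y := by
    rw [nsmul_eq_mul, nsmul_eq_mul, Nat.cast_sub (Int.natAbs_pos.2 hz0), Int.natCast_natAbs,
      Int.natCast_natAbs, Nat.cast_one]
    rcases mul_neg_iff.1 hyz with ⟨hy0, hz0⟩ | ⟨hy0, hz0⟩
    · rw [abs_of_pos hy0, abs_of_neg hz0]; ring
    · rw [abs_of_neg hy0, abs_of_pos hz0]; ring
  rw [key]
  exact add_mem (nsmul_mem hz _) (nsmul_mem hy _)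

lemma exists_forall_add_mul_mem_of_not_bddBelow {G : Set ℤ} {q : ℤ} (hq : 0 < q)
    (hadd : ∀ y ∈ G, y + q ∈ G) (hG : ¬BddBelow G) : ∃ y₀, ∀ t : ℤ, y₀ + t * q ∈ G := by
  have hcover : G ⊆ ⋃ r ∈ Set.Ico 0 q, {y ∈ G | y % q = r} := fun y hy =>
    Set.mem_biUnion ⟨Int.emod_nonneg y hq.ne', Int.emod_lt_of_pos y hq⟩ ⟨hy, rfl⟩
  obtain ⟨r, -, hrG⟩ : ∃ r ∈ Set.Ico 0 q, ¬BddBelow {y ∈ G | y % q = r} := by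
    by_contra! h
    exact hG (((Set.finite_Ico 0 q).bddBelow_biUnion.2 h).mono hcover)
  have hiter : ∀ y ∈ G, ∀ k : ℤ, 0 ≤ k → y + k * q ∈ G := by
    intro y hy k hk
    induction k, hk using Int.leInduction with
    | base => simpa using hy
    | succ k _ ih => simpa [add_mul, ← add_assoc] using hadd _ ih
  refine ⟨r, fun t => ?_⟩
  obtain ⟨y, ⟨hyG, hyr⟩, hy⟩ := not_bddBelow_iff.1 hrG (r + t * q)
  have hdiv := Int.emod_add_mul_ediv y q
  have hk : 0 ≤ t - y / q := by nlinarith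
  convert hiter y hyG _ hk using 1
  linear_combination hdiv - hyr

def unimodularAddEquiv (a b u v : ℤ) (h : u * a + v * b = 1) : ℤ × ℤ ≃+ ℤ × ℤ where
  toFun x := (a * x.1 + b * x.2, u * x.2 - v * x.1)
  invFun y := (u * y.1 - b * y.2, v * y.1 + a * y.2)
  left_inv x := Prod.ext (by linear_combination x.1 * h) (by linear_combination x.2 * h)
  right_inv y := Prod.ext (by linear_combination y.1 * h) (by linear_combination y.2 * h)
  map_add' x y := by ext <;> dsimp <;> ring

section

variable {M : AddSubmonoid (ℤ × ℤ)}

section Transport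

variable (e : ℤ × ℤ ≃+ ℤ × ℤ)

lemma mem_map_addEquiv {x : ℤ × ℤ} : x ∈ M.map e ↔ e.symm x ∈ M :=
  AddSubmonoid.mem_map_equiv

lemma isUnitIn_map_addEquiv {x : ℤ × ℤ} : IsUnitIn (M.map e) x ↔ IsUnitIn M (e.symm x) := by
  simp only [IsUnitIn, mem_map_addEquiv, map_neg]

lemma isAtomIn_map_addEquiv_apply {x : ℤ × ℤ} : IsAtomIn (M.map e) (e x) ↔ IsAtomIn M x := by
  unfold IsAtomIn
  rw [e.surjective.forall₂]
  simp only [mem_map_addEquiv, isUnitIn_map_addEquiv, AddEquiv.symm_apply_apply, ← map_add,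
    e.injective.eq_iff]

lemma setOf_isAtomIn_map_addEquiv :
    {a | IsAtomIn (M.map e) a} = e '' {a | IsAtomIn M a} := by
  ext x
  obtain ⟨x, rfl⟩ := e.surjective x
  simp [isAtomIn_map_addEquiv_apply]

lemma infinite_setOf_isAtomIn_map_addEquiv (h : {a | IsAtomIn M a}.Infinite) :
    {a | IsAtomIn (M.map e) a}.Infinite := by
  rw [setOf_isAtomIn_map_addEquiv]
  exact h.image e.injective.injOn

lemma atomicElems_map_addEquiv : AtomicElems (M.map e) = (AtomicElems M).map e := by
  rw [AtomicElems, AtomicElems, setOf_isAtomIn_map_addEquiv, AddMonoidHom.map_mclosure]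

lemma IsAtomicMonoid.of_map_addEquiv (h : IsAtomicMonoid (M.map e)) : IsAtomicMonoid M := by
  intro x hx hxu
  have := h (e x) (by simpa [mem_map_addEquiv]) (by simpa [isUnitIn_map_addEquiv])
  simpa [atomicElems_map_addEquiv, mem_map_addEquiv] using this

end Transport

lemma isUnitIn_zero : IsUnitIn M 0 :=
  ⟨zero_mem M, by simp⟩

lemma isAtomIn_or_exists_add {x : ℤ × ℤ} (hx : x ∈ M) (hxu : ¬IsUnitIn M x) :
    IsAtomIn M x ∨ ∃ r ∈ M, ∃ s ∈ M, x = r + s ∧ ¬IsUnitIn M r ∧ ¬IsUnitIn M s := by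
  refine or_iff_not_imp_left.2 fun h => ?_
  simpa [IsAtomIn, hx, hxu] using h

lemma not_isAtomIn_add {b p : ℤ × ℤ} (hb : IsAtomIn M b) (hp : p ∈ M) (hpu : ¬IsUnitIn M p) :
    ¬IsAtomIn M (b + p) := fun h =>
  (h.2.2 b p hb.1 hp rfl).elim hb.2.1 hpu

theorem subset_atomicElems_of_height (μ : ℤ × ℤ →+ ℤ) {P : Set (ℤ × ℤ)}
    (hP : ∀ x ∈ P, x ∈ M ∧ ¬IsUnitIn M x ∧ 0 < μ x)
    (hsplit : ∀ x ∈ P, ∀ r ∈ M, ∀ s ∈ M, x = r + s → ¬IsUnitIn M r → ¬IsUnitIn M s →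
      r ∈ P ∧ s ∈ P) :
    P ⊆ AtomicElems M := by
  intro x hx
  induction hn : (μ x).toNat using Nat.strong_induction_on generalizing x with
  | _ n ih =>
  obtain ⟨hxM, hxu, -⟩ := hP x hx
  rcases isAtomIn_or_exists_add hxM hxu with hat | ⟨r, hr, s, hs, rfl, hru, hsu⟩
  · exact AddSubmonoid.subset_closure hat
  obtain ⟨hrP, hsP⟩ := hsplit _ hx r hr s hs rfl hru hsu
  have hμr := (hP r hrP).2.2
  have hμs := (hP s hsP).2.2
  rw [map_add] at hn
  exact add_mem (ih _ (by omega) hrP rfl) (ih _ (by omega) hsP rfl)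

theorem finite_setOf_isAtomIn {N : ℤ} (hN : N ≠ 0) (hred : ∀ x, IsUnitIn M x → x = 0)
    (hmul : ∀ v : ℤ × ℤ, N • v ∈ M ∨ -(N • v) ∈ M) : {a | IsAtomIn M a}.Finite := by
  have : NeZero N.natAbs := ⟨Int.natAbs_ne_zero.2 hN⟩
  let f : ℤ × ℤ → ZMod N.natAbs × ZMod N.natAbs := fun a => (a.1, a.2)
  refine Set.Finite.of_finite_image (f := f) (Set.toFinite _) fun a ha b hb hab => ?_
  simp only [f, Prod.mk.injEq, ZMod.intCast_eq_intCast_iff_dvd_sub, Int.natAbs_dvd] at hab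
  obtain ⟨⟨i, hi⟩, ⟨j, hj⟩⟩ := hab
  have hba : b = a + N • (i, j) := by ext <;> simp <;> linarith
  by_contra hne
  have hv0 : N • (i, j) ≠ 0 := fun h => hne (by simp [hba, h])
  rcases hmul (i, j) with h | h
  · exact not_isAtomIn_add ha h (fun hu => hv0 (hred _ hu)) (hba ▸ hb)
  · refine not_isAtomIn_add hb h (fun hu => hv0 (neg_eq_zero.1 (hred _ hu))) ?_
    rwa [hba, add_neg_cancel_right]

lemma isUnitIn_iff_eq_zero (hfst : ∀ x ∈ M, 0 ≤ x.1) (hsnd : ∀ x ∈ M, x.1 = 0 → 0 ≤ x.2)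
    {x : ℤ × ℤ} : IsUnitIn M x ↔ x = 0 := by
  refine ⟨fun ⟨hx, hnx⟩ => ?_, fun h => h ▸ isUnitIn_zero⟩
  have h1 : x.1 = 0 := by linarith [hfst x hx, hfst (-x) hnx, Prod.fst_neg x]
  have h2 := hsnd (-x) hnx (by simp [h1])
  have := hsnd x hx h1
  exact Prod.ext h1 (by simp at h2 ⊢; omega)

lemma mem_atomicElems_of_fst_eq_zero (hfst : ∀ x ∈ M, 0 ≤ x.1)
    (hsnd : ∀ x ∈ M, x.1 = 0 → 0 ≤ x.2) {x : ℤ × ℤ} (hx : x ∈ M) (hx1 : x.1 = 0) (hx0 : x ≠ 0) :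
    x ∈ AtomicElems M := by
  refine subset_atomicElems_of_height (AddMonoidHom.snd ℤ ℤ)
    (P := {x | x ∈ M ∧ x.1 = 0 ∧ x ≠ 0}) (fun y ⟨hy, hy1, hy0⟩ => ⟨hy, ?_, ?_⟩)
    (fun y ⟨_, hy1, _⟩ r hr s hs hrs hru hsu => ?_) ⟨hx, hx1, hx0⟩
  · rwa [isUnitIn_iff_eq_zero hfst hsnd]
  · exact (hsnd y hy hy1).lt_of_ne fun h => hy0 (Prod.ext hy1 h.symm)
  · rw [isUnitIn_iff_eq_zero hfst hsnd] at hru hsu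
    have hsum : r.1 + s.1 = 0 := by rw [← Prod.fst_add, ← hrs, hy1]
    have := hfst r hr
    have := hfst s hs
    exact ⟨⟨hr, by omega, hru⟩, ⟨hs, by omega, hsu⟩⟩

lemma exists_snd_lt_of_not_mem_atomicElems (hfst : ∀ x ∈ M, 0 ≤ x.1)
    (hsnd : ∀ x ∈ M, x.1 = 0 → 0 ≤ x.2) {x : ℤ × ℤ} (hx : x ∈ M) (hx0 : x ≠ 0)
    (hxA : x ∉ AtomicElems M) (ih : ∀ z ∈ M, z ≠ 0 → z.1 < x.1 → z ∈ AtomicElems M) :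
    ∃ z ∈ M, z ≠ 0 ∧ z ∉ AtomicElems M ∧ z.1 = x.1 ∧ z.2 < x.2 := by
  have hxu : ¬IsUnitIn M x := by rwa [isUnitIn_iff_eq_zero hfst hsnd]
  rcases isAtomIn_or_exists_add hx hxu with hat | ⟨r, hr, s, hs, hrs, hru, hsu⟩
  · exact (hxA (AddSubmonoid.subset_closure hat)).elim
  rw [isUnitIn_iff_eq_zero hfst hsnd] at hru hsu
  have peel : ∀ r ∈ M, ∀ s ∈ M, x = r + s → r ≠ 0 → s ≠ 0 → r.1 = 0 →
      ∃ z ∈ M, z ≠ 0 ∧ z ∉ AtomicElems M ∧ z.1 = x.1 ∧ z.2 < x.2 := by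
    rintro r hr s hs rfl hr0 hs0 hr1
    have hr2 : 0 < r.2 := (hsnd r hr hr1).lt_of_ne fun h => hr0 (Prod.ext hr1 h.symm)
    have hrA := mem_atomicElems_of_fst_eq_zero hfst hsnd hr hr1 hr0
    exact ⟨s, hs, hs0, fun hsA => hxA (add_mem hrA hsA), by simp [hr1], by simp; omega⟩
  rcases (hfst r hr).eq_or_lt with hr1 | hr1
  · exact peel r hr s hs hrs hru hsu hr1.symm
  rcases (hfst s hs).eq_or_lt with hs1 | hs1
  · exact peel s hs r hr (hrs.trans (add_comm r s)) hsu hru hs1.symm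
  subst hrs
  exact absurd (add_mem (ih r hr hru (by simp; omega)) (ih s hs hsu (by simp; omega))) hxA

lemma not_bddBelow_fiber (hfst : ∀ x ∈ M, 0 ≤ x.1) (hsnd : ∀ x ∈ M, x.1 = 0 → 0 ≤ x.2)
    {x : ℤ × ℤ} (hx : x ∈ M) (hx0 : x ≠ 0) (hxA : x ∉ AtomicElems M)
    (ih : ∀ z ∈ M, z ≠ 0 → z.1 < x.1 → z ∈ AtomicElems M) :
    ¬BddBelow {y | (x.1, y) ∈ M} := by
  rintro ⟨b, hb⟩
  obtain ⟨y, ⟨hyM, hy0, hyA⟩, hmin⟩ := Int.exists_least_of_bdd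
    (P := fun y => (x.1, y) ∈ M ∧ (x.1, y) ≠ 0 ∧ (x.1, y) ∉ AtomicElems M)
    ⟨b, fun y hy => hb hy.1⟩ ⟨x.2, hx, hx0, hxA⟩
  obtain ⟨z, hzM, hz0, hzA, hz1, hz2⟩ :=
    exists_snd_lt_of_not_mem_atomicElems hfst hsnd hyM hy0 hyA ih
  have hz : z = (x.1, z.2) := Prod.ext hz1 rfl
  have := hmin z.2 ⟨hz ▸ hzM, hz ▸ hz0, hz ▸ hzA⟩
  exact absurd hz2 (not_lt.2 this)

lemma zsmul_mem_or_neg_zsmul_mem_of_fiber {q c y₀ : ℤ} (hq : 0 < q)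
    (hc : 0 < c) (hqM : ((0 : ℤ), q) ∈ M) (hfiber : ∀ t : ℤ, (c, y₀ + t * q) ∈ M)
    (v : ℤ × ℤ) : (q * q * c) • v ∈ M ∨ -((q * q * c) • v) ∈ M := by
  have hrow : ∀ s : ℤ, (q * c, q * s) ∈ M := fun s => by
    convert add_mem (M.zsmul_mem_of_nonneg (hfiber 0) (k := q - 1) (by omega)) (hfiber (s - y₀))
      using 1
    ext <;> simp <;> ring
  have hcone : ∀ w : ℤ × ℤ, 0 < w.1 ∨ (w.1 = 0 ∧ 0 ≤ w.2) → (q * q * c) • w ∈ M := by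
    rintro w (hw | ⟨hw1, hw2⟩)
    · convert add_mem (M.zsmul_mem_of_nonneg (hrow 0) (k := q * w.1 - 1) (by nlinarith))
        (hrow (q * c * w.2)) using 1
      ext <;> simp <;> ring
    · convert M.zsmul_mem_of_nonneg hqM (k := q * c * w.2) (by positivity) using 1
      ext <;> simp [hw1]; ring
  by_cases hv : 0 < v.1 ∨ (v.1 = 0 ∧ 0 ≤ v.2)
  · exact .inl (hcone v hv)
  · refine .inr ?_
    rw [← smul_neg]
    exact hcone (-v) (by simp only [Prod.fst_neg, Prod.snd_neg]; omega)

theorem isAtomicMonoid_of_lex_nonneg (hfst : ∀ x ∈ M, 0 ≤ x.1)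
    (hsnd : ∀ x ∈ M, x.1 = 0 → 0 ≤ x.2) {q : ℤ} (hq : 0 < q) (hqM : ((0 : ℤ), q) ∈ M)
    (hinf : {a | IsAtomIn M a}.Infinite) : IsAtomicMonoid M := by
  suffices h : ∀ n : ℕ, ∀ x ∈ M, x ≠ 0 → x.1 = n → x ∈ AtomicElems M from
    fun x hx hxu => h x.1.toNat x hx (by rwa [isUnitIn_iff_eq_zero hfst hsnd] at hxu)
      (Int.toNat_of_nonneg (hfst x hx)).symm
  intro n
  induction n using Nat.strong_induction_on with | _ n ih => ?_
  intro x hx hx0 hxn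
  by_contra hxA
  have ih' : ∀ z ∈ M, z ≠ 0 → z.1 < x.1 → z ∈ AtomicElems M := fun z hz hz0 hlt =>
    ih z.1.toNat (by have := hfst z hz; omega) z hz hz0 (Int.toNat_of_nonneg (hfst z hz)).symm
  have hc : 0 < x.1 := (hfst x hx).lt_of_ne fun h =>
    hxA (mem_atomicElems_of_fst_eq_zero hfst hsnd hx h.symm hx0)
  obtain ⟨y₀, hy₀⟩ := exists_forall_add_mul_mem_of_not_bddBelow (G := {y | (x.1, y) ∈ M}) hq
    (fun y hy => by simpa using add_mem hy hqM)
    (not_bddBelow_fiber hfst hsnd hx hx0 hxA ih')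
  exact hinf (finite_setOf_isAtomIn (by positivity) (fun _ => (isUnitIn_iff_eq_zero hfst hsnd).1)
    (zsmul_mem_or_neg_zsmul_mem_of_fiber hq hc hqM hy₀))

theorem isAtomicMonoid_of_fst_nonneg_of_neg_mem (hfst : ∀ x ∈ M, 0 ≤ x.1)
    (hneg : ∀ x ∈ M, x.1 = 0 → -x ∈ M) : IsAtomicMonoid M :=
  fun _ hx hxu => subset_atomicElems_of_height (AddMonoidHom.fst ℤ ℤ)
    (P := {x | x ∈ M ∧ ¬IsUnitIn M x})
    (fun y ⟨hy, hyu⟩ => ⟨hy, hyu, (hfst y hy).lt_of_ne fun h => hyu ⟨hy, hneg y hy h.symm⟩⟩)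
    (fun _ _ _ hr _ hs _ hru hsu => ⟨⟨hr, hru⟩, ⟨hs, hsu⟩⟩) ⟨hx, hxu⟩

theorem isAtomicMonoid_of_fst_nonneg (hfst : ∀ x ∈ M, 0 ≤ x.1)
    (hinf : {a | IsAtomIn M a}.Infinite) : IsAtomicMonoid M := by
  by_cases hneg : ∀ x ∈ M, x.1 = 0 → -x ∈ M
  · exact isAtomicMonoid_of_fst_nonneg_of_neg_mem hfst hneg
  push Not at hneg
  obtain ⟨⟨x₁, y⟩, hyM, rfl : x₁ = 0, hyn⟩ := hneg
  have hline : ∀ z : ℤ, z ∈ M.comap (AddMonoidHom.inr ℤ ℤ) ↔ ((0 : ℤ), z) ∈ M := fun _ =>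
    AddSubmonoid.mem_comap
  have hsign : ∀ z ∈ M, z.1 = 0 → 0 ≤ y * z.2 := by
    rintro ⟨_, z⟩ hz (rfl : _ = (0 : ℤ))
    by_contra! hyz
    have := AddSubmonoid.neg_mem_of_mul_neg ((hline y).2 hyM) ((hline z).2 hz) hyz
    exact hyn (by simpa [hline] using this)
  rcases (show y ≠ 0 by rintro rfl; exact hyn hyM).lt_or_gt with hy | hy
  · let σ : ℤ × ℤ ≃+ ℤ × ℤ := (AddEquiv.refl ℤ).prodCongr (AddEquiv.neg ℤ)
    refine IsAtomicMonoid.of_map_addEquiv σ (isAtomicMonoid_of_lex_nonneg (q := -y) ?_ ?_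
      (by omega) ?_ (infinite_setOf_isAtomIn_map_addEquiv σ hinf))
    · intro w hw
      exact hfst (σ.symm w) ((mem_map_addEquiv σ).1 hw)
    · intro w hw hw1
      have := hsign _ ((mem_map_addEquiv σ).1 hw) hw1
      change 0 ≤ y * -w.2 at this
      nlinarith
    · rw [mem_map_addEquiv]
      change ((0 : ℤ), - -y) ∈ M
      rwa [neg_neg]
  · exact isAtomicMonoid_of_lex_nonneg hfst
      (fun z hz hz1 => nonneg_of_mul_nonneg_right (hsign z hz hz1) hy) hy hyM hinf

lemma RationallySupported.exists_addEquiv_fst_nonneg (hM : RationallySupported M) :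
    ∃ e : ℤ × ℤ ≃+ ℤ × ℤ, ∀ x ∈ M.map e, 0 ≤ x.1 := by
  obtain ⟨a, b, hab, hsupp⟩ := hM
  obtain ⟨g, a', b', hg, hcop, rfl, rfl⟩ := Int.exists_gcd_one' (Int.gcd_pos_iff.2 hab)
  obtain ⟨u, v, huv⟩ := Int.isCoprime_iff_gcd_eq_one.2 hcop
  refine ⟨unimodularAddEquiv a' b' u v huv, ?_⟩
  rintro _ ⟨x, hx, rfl⟩
  change 0 ≤ a' * x.1 + b' * x.2
  have hg : (0 : ℤ) < g := by exact_mod_cast hg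
  nlinarith [hsupp x hx]

end

/-- A rationally supported submonoid of ℤ² with infinitely many atoms is atomic. -/
theorem rationally_supported_infinitely_many_atoms_atomic
    (M : AddSubmonoid (ℤ × ℤ)) (hM : RationallySupported M)
    (hinf : {a : ℤ × ℤ | IsAtomIn M a}.Infinite) :
    IsAtomicMonoid M := by
  obtain ⟨e, he⟩ := hM.exists_addEquiv_fst_nonneg
  exact IsAtomicMonoid.of_map_addEquiv e
    (isAtomicMonoid_of_fst_nonneg he (infinite_setOf_isAtomIn_map_addEquiv e hinf))
end

section
/- Let L be a line in ℝ² with irrational slope (not necessarily through the origin). Then for every ε > 0 there exists a nonzero lattice point v ∈ ℤ² with d(v, L) < ε; moreover v can be chosen with both coordinates even, and v can also be chosen with both coordinates odd. -/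
lemma dense_irr (α : ℝ) (hα : Irrational α) :
    Dense ((AddSubgroup.closure ({1, α} : Set ℝ) : AddSubgroup ℝ) : Set ℝ) := by
  rcases AddSubgroup.dense_or_cyclic (AddSubgroup.closure ({1, α} : Set ℝ)) with h | ⟨a, ha⟩
  · exact h
  · exfalso
    have h1 : (1 : ℝ) ∈ AddSubgroup.closure ({1, α} : Set ℝ) :=
      AddSubgroup.subset_closure (Set.mem_insert _ _)
    have h2 : α ∈ AddSubgroup.closure ({1, α} : Set ℝ) :=
      AddSubgroup.subset_closure (Set.mem_insert_of_mem _ rfl)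
    rw [ha, AddSubgroup.mem_closure_singleton] at h1 h2
    obtain ⟨n, hn⟩ := h1
    obtain ⟨m, hm⟩ := h2
    have hn0 : n ≠ 0 := by rintro rfl; simp at hn
    have ha0 : a ≠ 0 := by rintro rfl; simp at hn
    rw [zsmul_eq_mul] at hn hm
    refine hα ⟨(m : ℚ) / n, ?_⟩
    push_cast
    rw [div_eq_iff (by exact_mod_cast hn0 : (n : ℝ) ≠ 0)]
    linear_combination (n : ℝ) * hm - (m : ℝ) * hn

/-- key approximation: nonzero (m,n) with m + nα close to any target. -/
lemma approx (α : ℝ) (hα : Irrational α) (t ε : ℝ) (hε : 0 < ε) :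
    ∃ m n : ℤ, ¬(m = 0 ∧ n = 0) ∧ |(m : ℝ) + n * α - t| < ε := by
  have hd := dense_irr α hα
  have key : ∀ t' ε', 0 < ε' → ∃ m n : ℤ, |(m : ℝ) + n * α - t'| < ε' := by
    intro t' ε' hε'
    obtain ⟨s, hs, hmem⟩ := Metric.dense_iff.mp hd t' ε' hε'
    rw [SetLike.mem_coe, AddSubgroup.mem_closure_pair] at hmem
    obtain ⟨m, n, hmn⟩ := hmem
    refine ⟨m, n, ?_⟩
    rw [Metric.mem_ball, Real.dist_eq] at hs
    have : (m : ℝ) + n * α = s := by rw [← hmn]; push_cast [zsmul_eq_mul]; ring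
    rw [this]; exact hs
  rcases le_or_gt (ε / 2) |t| with ht | ht
  · obtain ⟨m, n, h⟩ := key t (ε / 2) (by linarith)
    refine ⟨m, n, ?_, by linarith [h]⟩
    rintro ⟨rfl, rfl⟩
    simp only [Int.cast_zero, zero_mul, add_zero, zero_add, zero_sub, abs_neg] at h
    linarith
  · obtain ⟨m, n, h⟩ := key (t + 3 * ε / 4) (ε / 4) (by linarith)
    have habs := abs_sub_abs_le_abs_sub ((m:ℝ) + n * α - t) (3 * ε / 4)
    refine ⟨m, n, ?_, ?_⟩
    · rintro ⟨rfl, rfl⟩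
      simp only [Int.cast_zero, zero_mul, add_zero, zero_add] at h
      rw [abs_lt] at h ht
      linarith [h.1, ht.1]
    · have : (m:ℝ) + n * α - (t + 3 * ε / 4) = ((m:ℝ) + n * α - t) - 3*ε/4 := by ring
      rw [this] at h
      rw [abs_lt] at h ⊢
      rw [abs_lt] at *
      constructor <;> linarith [h.1, h.2]


/-- For any affine line in ℝ² with irrational slope and any ε > 0 there is a
nonzero lattice point within distance ε of the line; moreover this point may be
chosen with both coordinates even, and may also be chosen with both coordinates
odd. -/
theorem lattice_point_near_irrational_line_even_odd (α c : ℝ) (hα : Irrational α)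
    (ε : ℝ) (hε : 0 < ε) :
    (∃ v : ℤ × ℤ, v ≠ 0 ∧ Even v.1 ∧ Even v.2 ∧ ∃ x : ℝ,
        Real.sqrt (((v.1 : ℝ) - x) ^ 2 + ((v.2 : ℝ) - (α * x + c)) ^ 2) < ε) ∧
    (∃ v : ℤ × ℤ, v ≠ 0 ∧ Odd v.1 ∧ Odd v.2 ∧ ∃ x : ℝ,
        Real.sqrt (((v.1 : ℝ) - x) ^ 2 + ((v.2 : ℝ) - (α * x + c)) ^ 2) < ε) := by
  have sqrt_helper : ∀ (a b : ℝ), |b| < ε → Real.sqrt ((a - a) ^ 2 + b ^ 2) < ε := by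
    intro a b hb
    rw [sub_self]
    rw [zero_pow (two_ne_zero), zero_add, Real.sqrt_sq_eq_abs]
    exact hb
  constructor
  · obtain ⟨m, n, hmn, h⟩ := approx α hα (c / 2) (ε / 2) (by linarith)
    refine ⟨(-2 * n, 2 * m), ?_, ⟨-n, by ring⟩, ⟨m, by ring⟩, (-2 * n : ℤ), ?_⟩
    · intro hv
      rw [Prod.ext_iff] at hv
      simp only [Prod.fst_zero, Prod.snd_zero] at hv
      exact hmn ⟨by omega, by omega⟩
    · have hb : |((2 * m : ℤ) : ℝ) - (α * ((-2 * n : ℤ) : ℝ) + c)| < ε := by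
        have : ((2 * m : ℤ) : ℝ) - (α * ((-2 * n : ℤ) : ℝ) + c) = 2 * ((m : ℝ) + n * α - c / 2) := by
          push_cast; ring
        rw [this, abs_mul, abs_two]
        linarith [h, abs_nonneg ((m : ℝ) + n * α - c / 2)]
      have := sqrt_helper ((-2 * n : ℤ) : ℝ) (((2 * m : ℤ) : ℝ) - (α * ((-2 * n : ℤ) : ℝ) + c)) hb
      convert this using 3 <;> push_cast <;> ring
  · obtain ⟨m, n, hmn, h⟩ := approx α hα ((α + c - 1) / 2) (ε / 2) (by linarith)
    refine ⟨(-2 * n + 1, 2 * m + 1), ?_, ⟨-n, by ring⟩, ⟨m, by ring⟩, (-2 * n + 1 : ℤ), ?_⟩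
    · intro hv
      rw [Prod.ext_iff] at hv
      simp only [Prod.fst_zero, Prod.snd_zero] at hv
      omega
    · have hb : |((2 * m + 1 : ℤ) : ℝ) - (α * ((-2 * n + 1 : ℤ) : ℝ) + c)| < ε := by
        have : ((2 * m + 1 : ℤ) : ℝ) - (α * ((-2 * n + 1 : ℤ) : ℝ) + c)
            = 2 * ((m : ℝ) + n * α - (α + c - 1) / 2) := by
          push_cast; ring
        rw [this, abs_mul, abs_two]
        linarith [h, abs_nonneg ((m : ℝ) + n * α - (α + c - 1) / 2)]
      have := sqrt_helper ((-2 * n + 1 : ℤ) : ℝ)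
        (((2 * m + 1 : ℤ) : ℝ) - (α * ((-2 * n + 1 : ℤ) : ℝ) + c)) hb
      convert this using 3 <;> push_cast <;> ring
end

section
/- A cancellative commutative monoid M is quasi-atomic if and only if every nonzero prime ideal of M contains an atom. -/
/-!
The non-divisors of atomic elements form a prime ideal containing no atom, nonempty exactly
when quasi-atomicity fails. Conversely, a nonempty proper prime ideal contains no unit, so by
quasi-atomicity it contains an atomic element, and primality passes from a sum of atoms to one
of its summands.
-/

/-- An atom of a cancellative commutative additive monoid. -/
def IsAtomElem {M : Type*} [AddCancelCommMonoid M] (a : M) : Prop :=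
  ¬ IsAddUnit a ∧ ∀ r s : M, a = r + s → IsAddUnit r ∨ IsAddUnit s

/-- The submonoid generated by the atoms (the atomic elements). -/
def Atomics (M : Type*) [AddCancelCommMonoid M] : AddSubmonoid M :=
  AddSubmonoid.closure {a : M | IsAtomElem a}

/-- M is quasi-atomic: every non-invertible element divides an atomic element. -/
def IsQuasiAtomic (M : Type*) [AddCancelCommMonoid M] : Prop :=
  ∀ b : M, ¬ IsAddUnit b → ∃ m : M, b + m ∈ Atomics M

section

variable {M : Type*} [AddCommMonoid M]

theorem zero_notMem_of_ne_univ {P : Set M} (hideal : ∀ r ∈ P, ∀ s : M, r + s ∈ P)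
    (hproper : P ≠ Set.univ) : (0 : M) ∉ P := fun h0 =>
  hproper <| Set.eq_univ_of_forall fun x => by simpa using hideal 0 h0 x

theorem not_isAddUnit_of_mem {P : Set M} (hideal : ∀ r ∈ P, ∀ s : M, r + s ∈ P)
    (h0 : (0 : M) ∉ P) {u : M} (hu : u ∈ P) : ¬ IsAddUnit u := fun hunit => by
  obtain ⟨v, hv⟩ := hunit.exists_neg
  exact h0 (hv ▸ hideal u hu v)

theorem AddSubmonoid.exists_mem_of_closure_mem_of_prime {S P : Set M}
    (hprime : ∀ r s : M, r + s ∈ P → r ∈ P ∨ s ∈ P) (h0 : (0 : M) ∉ P) {x : M}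
    (hx : x ∈ AddSubmonoid.closure S) (hxP : x ∈ P) : ∃ a ∈ P, a ∈ S := by
  induction hx using AddSubmonoid.closure_induction with
  | mem a ha => exact ⟨a, hxP, ha⟩
  | zero => exact absurd hxP h0
  | add r s _ _ ihr ihs => exact (hprime r s hxP).elim ihr ihs

/-- The elements dividing no element of `N`. -/
def AddSubmonoid.nonDivisors (N : AddSubmonoid M) : Set M :=
  {x | ∀ m : M, x + m ∉ N}

namespace AddSubmonoid

variable {N : AddSubmonoid M}

theorem notMem_nonDivisors_of_mem {x : M} (hx : x ∈ N) : x ∉ N.nonDivisors :=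
  fun h => h 0 (by rwa [add_zero])

theorem add_mem_nonDivisors {r : M} (hr : r ∈ N.nonDivisors) (s : M) :
    r + s ∈ N.nonDivisors := fun m hm => hr (s + m) (by rwa [← add_assoc])

theorem nonDivisors_ne_univ : N.nonDivisors ≠ Set.univ := fun h =>
  notMem_nonDivisors_of_mem N.zero_mem (h ▸ Set.mem_univ 0)

theorem mem_or_mem_of_add_mem_nonDivisors {r s : M} (hrs : r + s ∈ N.nonDivisors) :
    r ∈ N.nonDivisors ∨ s ∈ N.nonDivisors := by
  by_contra! h
  obtain ⟨⟨m, hm⟩, ⟨n, hn⟩⟩ : (∃ m, r + m ∈ N) ∧ (∃ n, s + n ∈ N) := by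
    simpa [nonDivisors] using h
  exact hrs (m + n) (by simpa only [add_add_add_comm] using N.add_mem hm hn)

end AddSubmonoid

end

/-- A monoid is quasi-atomic if and only if every nonzero (i.e. nonempty) prime
ideal contains an atom. -/
theorem quasiAtomic_iff_every_prime_ideal_contains_atom
    (M : Type*) [AddCancelCommMonoid M] :
    IsQuasiAtomic M ↔
      ∀ P : Set M, P.Nonempty → (∀ r ∈ P, ∀ s : M, r + s ∈ P) → P ≠ Set.univ →
        (∀ r s : M, r + s ∈ P → r ∈ P ∨ s ∈ P) → ∃ a ∈ P, IsAtomElem a := by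
  constructor
  · rintro hqa P ⟨b, hb⟩ hideal hproper hprime
    have h0 := zero_notMem_of_ne_univ hideal hproper
    obtain ⟨m, hm⟩ := hqa b (not_isAddUnit_of_mem hideal h0 hb)
    exact AddSubmonoid.exists_mem_of_closure_mem_of_prime hprime h0 hm (hideal b hb m)
  · intro H b hb
    by_contra! hcon
    obtain ⟨a, haP, ha⟩ := H (Atomics M).nonDivisors ⟨b, hcon⟩
      (fun _ hr => AddSubmonoid.add_mem_nonDivisors hr) AddSubmonoid.nonDivisors_ne_univ
      (fun _ _ => AddSubmonoid.mem_or_mem_of_add_mem_nonDivisors)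
    exact AddSubmonoid.notMem_nonDivisors_of_mem (N := Atomics M)
      (AddSubmonoid.subset_closure ha) haP
end

section
/- Let M = {(0,0)} ∪ (ℤ × {n ∈ ℤ : n ≥ 1}) as an additive submonoid of ℤ². Then M is a reduced atomic monoid whose set of atoms is exactly {(a, 1) : a ∈ ℤ}; in particular M has infinitely many atoms. -/
/-- The submonoid {(0,0)} ∪ (ℤ × ℤ_{≥1}) of ℤ². -/
def M8 : AddSubmonoid (ℤ × ℤ) where
  carrier := {p : ℤ × ℤ | p = 0 ∨ 1 ≤ p.2}
  zero_mem' := Or.inl rfl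
  add_mem' := by
    rintro ⟨a1, a2⟩ ⟨b1, b2⟩ (h | h) (h' | h') <;>
      simp_all [Prod.ext_iff] <;> omega

lemma mem_M8 (p : ℤ × ℤ) : p ∈ M8 ↔ p = 0 ∨ 1 ≤ p.2 := Iff.rfl

lemma M8_unit_iff (x : ℤ × ℤ) : IsUnitIn M8 x ↔ x = 0 := by
  constructor
  · rintro ⟨h1, h2⟩
    rcases h1 with h1 | h1
    · exact h1
    rcases h2 with h2 | h2
    · simpa using neg_eq_zero.mp h2
    · simp only [Prod.snd_neg] at h2; omega
  · rintro rfl; exact ⟨M8.zero_mem, by simpa using M8.zero_mem⟩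

lemma M8_atom_iff (a : ℤ × ℤ) : IsAtomIn M8 a ↔ a.2 = 1 := by
  constructor
  · rintro ⟨hmem, hnu, hmin⟩
    rcases hmem with rfl | h
    · exact absurd ((M8_unit_iff 0).mpr rfl) hnu
    by_contra hne
    have h2 : 2 ≤ a.2 := by omega
    have := hmin (a.1, 1) (0, a.2 - 1) (Or.inr (by simp))
      (Or.inr (by simp; omega)) (by ext <;> simp)
    rcases this with h | h <;> rw [M8_unit_iff] at h <;>
      simp [Prod.ext_iff] at h <;> omega
  · intro h
    refine ⟨Or.inr (by omega), ?_, ?_⟩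
    · rw [M8_unit_iff]; intro hz; rw [hz] at h; simp at h
    · rintro r s hr hs heq
      rw [M8_unit_iff, M8_unit_iff]
      have h2 : a.2 = r.2 + s.2 := by rw [heq]; rfl
      rcases hr with rfl | hr
      · exact Or.inl rfl
      rcases hs with rfl | hs
      · exact Or.inr rfl
      omega

lemma M8_atomic_aux : ∀ n : ℕ, ∀ a : ℤ, ((a, (n : ℤ) + 1) : ℤ × ℤ) ∈ AtomicElems M8 := by
  intro n
  induction n with
  | zero => intro a; exact AddSubmonoid.subset_closure ((M8_atom_iff _).mpr rfl)
  | succ k ih =>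
    intro a
    have h1 : ((a, 1) : ℤ × ℤ) ∈ AtomicElems M8 :=
      AddSubmonoid.subset_closure ((M8_atom_iff _).mpr rfl)
    have := (AtomicElems M8).add_mem h1 (ih 0)
    have heq : ((a, 1) : ℤ × ℤ) + (0, (k : ℤ) + 1) = (a, ((k : ℤ) + 1) + 1) := by
      ext <;> simp <;> ring
    rw [heq] at this
    exact_mod_cast this

/-- M₈ = {(0,0)} ∪ (ℤ × ℤ_{≥1}) is a reduced atomic monoid whose atoms are
exactly {(a,1) : a ∈ ℤ}; in particular it has infinitely many atoms. -/
theorem M8_reduced_atomic_atoms :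
    (∀ x ∈ M8, IsUnitIn M8 x → x = 0) ∧
    ({a : ℤ × ℤ | IsAtomIn M8 a} = {p : ℤ × ℤ | p.2 = 1}) ∧
    (∀ x ∈ M8, ¬ IsUnitIn M8 x → x ∈ AtomicElems M8) ∧
    {a : ℤ × ℤ | IsAtomIn M8 a}.Infinite := by
  refine ⟨fun x _ hu => (M8_unit_iff x).mp hu, ?_, ?_, ?_⟩
  · ext a; exact M8_atom_iff a
  · intro x hx hnu
    rcases hx with rfl | h
    · exact absurd ((M8_unit_iff 0).mpr rfl) hnu
    obtain ⟨n, hn⟩ : ∃ n : ℕ, x.2 = (n : ℤ) + 1 := ⟨(x.2 - 1).toNat, by omega⟩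
    have := M8_atomic_aux n x.1
    rwa [← hn, Prod.mk.eta] at this
  · have : {a : ℤ × ℤ | IsAtomIn M8 a} = {p : ℤ × ℤ | p.2 = 1} := by
      ext a; exact M8_atom_iff a
    rw [this]
    apply Set.infinite_of_injective_forall_mem
      (f := fun a : ℤ => ((a, 1) : ℤ × ℤ))
    · intro a b hab; simpa [Prod.ext_iff] using hab
    · intro a; rfl
end

section
/- Let M' be the submonoid of ℤ³ generated by (0,0,1) together with all (x,1,0) for x ∈ ℤ, and let M = M' ∪ {(x,y,z) ∈ ℤ³ : y ≥ 2}. Then M is a reduced submonoid of ℤ³ whose set of atoms is exactly {(0,0,1)} ∪ {(n,1,0) : n ∈ ℤ}, and M is not atomic: the element (0,2,−1) ∈ M is not a sum of atoms. -/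
/-- An element of ℤ³ invertible within the submonoid M. -/
def IsUnitIn3 (M : AddSubmonoid (ℤ × ℤ × ℤ)) (x : ℤ × ℤ × ℤ) : Prop :=
  x ∈ M ∧ -x ∈ M

/-- An atom of the submonoid M of ℤ³. -/
def IsAtomIn3 (M : AddSubmonoid (ℤ × ℤ × ℤ)) (a : ℤ × ℤ × ℤ) : Prop :=
  a ∈ M ∧ ¬ IsUnitIn3 M a ∧
    ∀ r s : ℤ × ℤ × ℤ, r ∈ M → s ∈ M → a = r + s → IsUnitIn3 M r ∨ IsUnitIn3 M s

/-! The monoid `M` is the union of the monoid `M'` generated by `(0,0,1)` and the `(x,1,0)`,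
whose elements all have third coordinate `≥ 0`, with the half-space `y ≥ 2`. Membership in `M`
is a linear condition on the coordinates, so `M` is reduced, and every element of `M` other than
`0` and the generators of `M'` splits off `(0,0,1)`. Hence the atoms of `M` are exactly these
generators and they only generate `M'`, which misses `(0,2,-1)`. -/

lemma isUnitIn3_zero (M : AddSubmonoid (ℤ × ℤ × ℤ)) : IsUnitIn3 M 0 :=
  ⟨zero_mem M, by simp⟩

lemma isAtomIn3_iff_of_reduced {M : AddSubmonoid (ℤ × ℤ × ℤ)}
    (hred : ∀ x, IsUnitIn3 M x → x = 0) (a : ℤ × ℤ × ℤ) :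
    IsAtomIn3 M a ↔
      a ∈ M ∧ a ≠ 0 ∧ ∀ r s, r ∈ M → s ∈ M → a = r + s → r = 0 ∨ s = 0 := by
  have hunit : ∀ x, IsUnitIn3 M x ↔ x = 0 :=
    fun x => ⟨hred x, fun hx => hx ▸ isUnitIn3_zero M⟩
  simp only [IsAtomIn3, hunit, ne_eq]

namespace NonAtomicExample

def generators : Set (ℤ × ℤ × ℤ) := {(0, 0, 1)} ∪ {p | p.2.1 = 1 ∧ p.2.2 = 0}

def closureGenerators : AddSubmonoid (ℤ × ℤ × ℤ) where
  carrier := {p | 0 ≤ p.2.1 ∧ 0 ≤ p.2.2 ∧ (p.2.1 = 0 → p.1 = 0)}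
  add_mem' := by
    rintro ⟨x, y, z⟩ ⟨x', y', z'⟩ ⟨hy, hz, hx⟩ ⟨hy', hz', hx'⟩
    simp only [Set.mem_ofPred_eq, Prod.mk_add_mk] at *
    omega
  zero_mem' := by simp

lemma closure_generators : AddSubmonoid.closure generators = closureGenerators := by
  refine le_antisymm (AddSubmonoid.closure_le.2 ?_) ?_
  · rintro p (rfl | ⟨hy, hz⟩)
    · simp [closureGenerators]
    · simp [closureGenerators, hy, hz]
  · rintro ⟨x, y, z⟩ h
    obtain ⟨hy, hz, hx⟩ : 0 ≤ y ∧ 0 ≤ z ∧ (y = 0 → x = 0) := h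
    have e3 : ((0, 0, 1) : ℤ × ℤ × ℤ) ∈ AddSubmonoid.closure generators :=
      AddSubmonoid.subset_closure (Or.inl rfl)
    have e2 (x : ℤ) : ((x, 1, 0) : ℤ × ℤ × ℤ) ∈ AddSubmonoid.closure generators :=
      AddSubmonoid.subset_closure (Or.inr ⟨rfl, rfl⟩)
    lift y to ℕ using hy
    lift z to ℕ using hz
    cases y with
    | zero =>
      obtain rfl : x = 0 := hx Nat.cast_zero
      have : ((0, ((0 : ℕ) : ℤ), (z : ℤ)) : ℤ × ℤ × ℤ) = z • (0, 0, 1) := by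
        simp
      exact this ▸ nsmul_mem e3 _
    | succ n =>
      have : ((x, ((n + 1 : ℕ) : ℤ), (z : ℤ)) : ℤ × ℤ × ℤ) =
          (x, 1, 0) + n • (0, 1, 0) + z • (0, 0, 1) := by
        simp [add_comm]
      exact this ▸ add_mem (add_mem (e2 x) (nsmul_mem (e2 0) _)) (nsmul_mem e3 _)

lemma mem_closure_generators_iff (p : ℤ × ℤ × ℤ) :
    p ∈ AddSubmonoid.closure generators ↔ 0 ≤ p.2.1 ∧ 0 ≤ p.2.2 ∧ (p.2.1 = 0 → p.1 = 0) := by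
  rw [closure_generators]
  rfl

section

variable {M : AddSubmonoid (ℤ × ℤ × ℤ)}
  (hM : (M : Set (ℤ × ℤ × ℤ)) =
    (AddSubmonoid.closure generators : Set (ℤ × ℤ × ℤ)) ∪ {p | 2 ≤ p.2.1})
include hM

lemma mem_iff (p : ℤ × ℤ × ℤ) :
    p ∈ M ↔ 0 ≤ p.2.1 ∧ (p.2.1 = 0 → p.1 = 0) ∧ (p.2.1 ≤ 1 → 0 ≤ p.2.2) := by
  rw [← SetLike.mem_coe, hM, Set.mem_union, SetLike.mem_coe, mem_closure_generators_iff,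
    Set.mem_ofPred_eq]
  omega

lemma eq_zero_of_isUnitIn3 (x : ℤ × ℤ × ℤ) (hx : IsUnitIn3 M x) : x = 0 := by
  obtain ⟨hx, hnx⟩ := hx
  rw [mem_iff hM] at hx hnx
  simp only [Prod.fst_neg, Prod.snd_neg] at hnx
  simp only [Prod.ext_iff, Prod.fst_zero, Prod.snd_zero]
  omega

lemma sub_mem_of_not_mem_generators {a : ℤ × ℤ × ℤ} (ha : a ∈ M) (ha0 : a ≠ 0)
    (hgen : a ∉ generators) : a - (0, 0, 1) ∈ M := by
  obtain ⟨x, y, z⟩ := a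
  simp only [generators, Set.mem_union, Set.mem_singleton_iff, Set.mem_ofPred_eq,
    Prod.mk.injEq, ne_eq, Prod.mk_eq_zero, not_or, not_and] at ha0 hgen
  rw [mem_iff hM] at ha ⊢
  simp only [Prod.fst_sub, Prod.snd_sub] at ha ha0 hgen ⊢
  omega

lemma setOf_isAtomIn3 : {a | IsAtomIn3 M a} = generators := by
  ext a
  simp only [Set.mem_ofPred_eq, isAtomIn3_iff_of_reduced (eq_zero_of_isUnitIn3 hM)]
  have e3_mem : ((0, 0, 1) : ℤ × ℤ × ℤ) ∈ M := (mem_iff hM _).2 (by norm_num)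
  constructor
  · rintro ⟨ha, ha0, hsplit⟩
    by_contra hgen
    rcases hsplit _ _ (sub_mem_of_not_mem_generators hM ha ha0 hgen) e3_mem
      (sub_add_cancel a _).symm with h | h
    · exact hgen (Or.inl (sub_eq_zero.1 h))
    · simp [Prod.ext_iff] at h
  · intro hgen
    obtain ⟨x, y, z⟩ := a
    simp only [generators, Set.mem_union, Set.mem_singleton_iff, Set.mem_ofPred_eq,
      Prod.mk.injEq] at hgen
    simp only [mem_iff hM, ne_eq, Prod.mk_eq_zero, Prod.forall, Prod.mk_add_mk, Prod.mk.injEq]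
    refine ⟨by omega, by omega, fun r₁ r₂ r₃ s₁ s₂ s₃ hr hs hsum => by omega⟩

end

end NonAtomicExample

open NonAtomicExample in
/-- Let M' be the submonoid of ℤ³ generated by (0,0,1) and all (x,1,0), and
M = M' ∪ {(x,y,z) : y ≥ 2}.  Then M is reduced, its atoms are exactly
(0,0,1) and the (n,1,0), and M is not atomic: (0,2,-1) is not a sum of atoms. -/
theorem M10_reduced_atoms_not_atomic (M : AddSubmonoid (ℤ × ℤ × ℤ))
    (hM : (M : Set (ℤ × ℤ × ℤ)) =
      (AddSubmonoid.closure ({(0, 0, 1)} ∪ {p : ℤ × ℤ × ℤ | p.2.1 = 1 ∧ p.2.2 = 0}) :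
        Set (ℤ × ℤ × ℤ)) ∪ {p : ℤ × ℤ × ℤ | 2 ≤ p.2.1}) :
    (∀ x ∈ M, IsUnitIn3 M x → x = 0) ∧
    ({a : ℤ × ℤ × ℤ | IsAtomIn3 M a}
        = {(0, 0, 1)} ∪ {p : ℤ × ℤ × ℤ | p.2.1 = 1 ∧ p.2.2 = 0}) ∧
    ((0, 2, -1) ∈ M ∧
      (0, 2, -1) ∉ AddSubmonoid.closure {a : ℤ × ℤ × ℤ | IsAtomIn3 M a}) := by
  change _ = (AddSubmonoid.closure generators : Set (ℤ × ℤ × ℤ)) ∪ _ at hM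
  change _ ∧ _ = generators ∧ _
  refine ⟨fun x _ => eq_zero_of_isUnitIn3 hM x, setOf_isAtomIn3 hM,
    (mem_iff hM _).2 (by norm_num), ?_⟩
  rw [setOf_isAtomIn3 hM, mem_closure_generators_iff]
  norm_num
end

section
/- For each positive integer k, let N_k = {0} ∪ {n ∈ ℤ : n ≥ k} and let M = (N_k × {0}) ∪ (ℤ × {n ∈ ℤ : n ≥ 1}) as an additive submonoid of ℤ². Then the set of atoms of M is exactly {(n, 0) : k ≤ n ≤ 2k−1} (so M has exactly k atoms), M is not atomic, but M is Furstenberg: every nonzero element of M is divisible in M by an atom. -/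
/-- Let k ≥ 1, N_k = {0} ∪ ℤ_{≥k}, and M = (N_k × {0}) ∪ (ℤ × ℤ_{≥1}).  Then the
atoms of M are exactly the (n,0) with k ≤ n ≤ 2k-1 (so M has exactly k atoms),
M is not atomic, but M is Furstenberg. -/
theorem M13_furstenberg_not_atomic (k : ℤ) (hk : 1 ≤ k) (M : AddSubmonoid (ℤ × ℤ))
    (hM : (M : Set (ℤ × ℤ)) =
      {p : ℤ × ℤ | p.2 = 0 ∧ (p.1 = 0 ∨ k ≤ p.1)} ∪ {p : ℤ × ℤ | 1 ≤ p.2}) :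
    ({a : ℤ × ℤ | IsAtomIn M a} = {p : ℤ × ℤ | p.2 = 0 ∧ k ≤ p.1 ∧ p.1 ≤ 2 * k - 1}) ∧
    {a : ℤ × ℤ | IsAtomIn M a}.ncard = k.toNat ∧
    ¬ (∀ x ∈ M, ¬ IsUnitIn M x → x ∈ AtomicElems M) ∧
    (∀ b ∈ M, ¬ IsUnitIn M b →
      ∃ a t : ℤ × ℤ, IsAtomIn M a ∧ t ∈ M ∧ b = a + t) := by
  have hmem : ∀ p : ℤ × ℤ, p ∈ M ↔ (p.2 = 0 ∧ (p.1 = 0 ∨ k ≤ p.1)) ∨ 1 ≤ p.2 := by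
    intro p
    have := Set.ext_iff.mp hM p
    simpa using this
  have hunit : ∀ x : ℤ × ℤ, IsUnitIn M x ↔ x = 0 := by
    intro x
    constructor
    · rintro ⟨h1, h2⟩
      rw [hmem] at h1 h2
      simp only [Prod.fst_neg, Prod.snd_neg] at h2
      have : x.1 = 0 ∧ x.2 = 0 := by omega
      exact Prod.ext this.1 this.2
    · rintro rfl
      constructor
      · rw [hmem]; left; simp
      · rw [neg_zero, hmem]; left; simp
  have hatom : ∀ a : ℤ × ℤ, IsAtomIn M a ↔ (a.2 = 0 ∧ k ≤ a.1 ∧ a.1 ≤ 2 * k - 1) := by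
    intro a
    constructor
    · rintro ⟨ha, hnu, hsplit⟩
      rw [hmem] at ha
      rcases ha with ⟨h2, h1⟩ | h2
      · rcases h1 with h0 | hk1
        · exact absurd ((hunit a).mpr (Prod.ext h0 h2)) hnu
        · refine ⟨h2, hk1, ?_⟩
          by_contra hle
          push_neg at hle
          have hdec := hsplit (k, 0) (a.1 - k, 0)
            (by rw [hmem]; left; exact ⟨rfl, Or.inr (le_refl k)⟩)
            (by rw [hmem]; left; exact ⟨rfl, Or.inr (by omega)⟩)
            (by refine Prod.ext ?_ ?_ <;> simp [h2])
          rcases hdec with h | h <;> rw [hunit] at h <;>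
            simp only [Prod.ext_iff, Prod.fst_zero, Prod.snd_zero] at h <;> omega
      · exfalso
        have hdec := hsplit (k, 0) (a.1 - k, a.2)
          (by rw [hmem]; left; exact ⟨rfl, Or.inr (le_refl k)⟩)
          (by rw [hmem]; right; exact h2)
          (by refine Prod.ext ?_ ?_ <;> simp)
        rcases hdec with h | h <;> rw [hunit] at h <;>
          simp only [Prod.ext_iff, Prod.fst_zero, Prod.snd_zero] at h <;> omega
    · rintro ⟨h2, hk1, hle⟩
      refine ⟨by rw [hmem]; left; exact ⟨h2, Or.inr hk1⟩, ?_, ?_⟩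
      · rw [hunit]
        intro h
        rw [Prod.ext_iff] at h
        simp only [Prod.fst_zero, Prod.snd_zero] at h
        omega
      · intro r s hr hs heq
        rw [hmem] at hr hs
        have e1 : a.1 = r.1 + s.1 := by rw [heq]; rfl
        have e2 : a.2 = r.2 + s.2 := by rw [heq]; rfl
        have hr0 : r.1 = 0 ∧ r.2 = 0 ∨ s.1 = 0 ∧ s.2 = 0 := by omega
        rcases hr0 with ⟨u1, u2⟩ | ⟨u1, u2⟩
        · left; rw [hunit]; exact Prod.ext u1 u2
        · right; rw [hunit]; exact Prod.ext u1 u2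
  have hset : {a : ℤ × ℤ | IsAtomIn M a}
      = {p : ℤ × ℤ | p.2 = 0 ∧ k ≤ p.1 ∧ p.1 ≤ 2 * k - 1} := by
    ext p; exact hatom p
  refine ⟨hset, ?_, ?_, ?_⟩
  · rw [hset]
    have heq : {p : ℤ × ℤ | p.2 = 0 ∧ k ≤ p.1 ∧ p.1 ≤ 2 * k - 1}
        = (fun n : ℤ => (n, (0 : ℤ))) '' Set.Icc k (2 * k - 1) := by
      ext p
      simp only [Set.mem_setOf_eq, Set.mem_image, Set.mem_Icc, Prod.ext_iff]
      constructor
      · rintro ⟨h2, h1, h3⟩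
        exact ⟨p.1, ⟨h1, h3⟩, rfl, h2.symm⟩
      · rintro ⟨n, ⟨h1, h3⟩, rfl, h0⟩
        exact ⟨h0.symm, h1, h3⟩
    rw [heq, Set.ncard_image_of_injective _ (fun a b h => (Prod.ext_iff.mp h).1),
      ← Finset.coe_Icc, Set.ncard_coe_finset, Int.card_Icc]
    congr 1
    ring
  · intro h
    have h01 : ((0 : ℤ), (1 : ℤ)) ∈ M := by rw [hmem]; right; exact le_refl 1
    have hnu : ¬ IsUnitIn M (0, 1) := by
      rw [hunit]
      intro h
      rw [Prod.ext_iff] at h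
      simp at h
    have hcl := h _ h01 hnu
    have hle : AtomicElems M ≤ (⊤ : AddSubmonoid ℤ).prod ⊥ := by
      apply AddSubmonoid.closure_le.mpr
      intro a ha
      have := (hatom a).mp ha
      exact ⟨trivial, this.1⟩
    have := hle hcl
    rcases this with ⟨-, h2⟩
    simp [AddSubmonoid.mem_bot] at h2
  · intro b hb hnb
    rw [hmem] at hb
    rcases hb with ⟨h2, h1 | h1⟩ | h1
    · exact absurd ((hunit b).mpr (Prod.ext h1 h2)) hnb
    · by_cases hle : b.1 ≤ 2 * k - 1
      · exact ⟨b, 0, (hatom b).mpr ⟨h2, h1, hle⟩, zero_mem M, (add_zero b).symm⟩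
      · refine ⟨(k, 0), (b.1 - k, 0), (hatom _).mpr ⟨rfl, le_refl k, by omega⟩,
          by rw [hmem]; left; exact ⟨rfl, Or.inr (by omega)⟩, ?_⟩
        refine Prod.ext ?_ ?_ <;> simp [h2]
    · refine ⟨(k, 0), (b.1 - k, b.2), (hatom _).mpr ⟨rfl, le_refl k, by omega⟩,
        by rw [hmem]; right; exact h1, ?_⟩
      refine Prod.ext ?_ ?_ <;> simp
end

section
/- Let u ∈ ℝ² be a unit vector with irrational slope ratio (e.g., u = (√2/2, √2/2)), and let M = {v ∈ ℤ² : ⟨v, u⟩ ≥ 0}. Then M is a reduced submonoid of ℤ² that is not a group and has no atoms (M is antimatter): every nonzero w ∈ M can be written as w = v + (w − v) with v, w − v nonzero elements of M. -/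
/-- The lattice points on the nonnegative side of the line orthogonal to u. -/
def M16 (u : ℝ × ℝ) : AddSubmonoid (ℤ × ℤ) where
  carrier := {v : ℤ × ℤ | 0 ≤ (v.1 : ℝ) * u.1 + (v.2 : ℝ) * u.2}
  zero_mem' := by simp
  add_mem' := by
    intro a b ha hb
    simp only [Set.mem_setOf_eq, Prod.fst_add, Prod.snd_add] at *
    push_cast
    nlinarith

/-- The functional v ↦ ⟨v,u⟩ as an additive monoid hom. -/
def phi16 (u : ℝ × ℝ) : (ℤ × ℤ) →+ ℝ where
  toFun v := (v.1 : ℝ) * u.1 + (v.2 : ℝ) * u.2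
  map_zero' := by simp
  map_add' a b := by
    simp only [Prod.fst_add, Prod.snd_add]
    push_cast
    ring

lemma mem_M16_iff (u : ℝ × ℝ) (v : ℤ × ℤ) : v ∈ M16 u ↔ 0 ≤ phi16 u v := Iff.rfl

lemma phi16_ne_zero (u : ℝ × ℝ) (h1 : u.1 ≠ 0) (hirr : Irrational (u.2 / u.1))
    {v : ℤ × ℤ} (hv : v ≠ 0) : phi16 u v ≠ 0 := by
  intro h0
  have h0' : (v.1 : ℝ) * u.1 + (v.2 : ℝ) * u.2 = 0 := h0
  rcases eq_or_ne v.2 0 with h2 | h2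
  · rw [h2] at h0'
    push_cast at h0'
    have : (v.1 : ℝ) = 0 := by
      rcases mul_eq_zero.1 (by linarith : (v.1 : ℝ) * u.1 = 0) with h | h
      · exact h
      · exact absurd h h1
    exact hv (Prod.ext (by exact_mod_cast this) h2)
  · apply hirr ⟨(-(v.1 : ℚ)) / (v.2 : ℚ), ?_⟩
    have h2' : (v.2 : ℝ) ≠ 0 := Int.cast_ne_zero.2 h2
    push_cast
    field_simp
    nlinarith [h0']

lemma phi16_dense (u : ℝ × ℝ) (h1 : u.1 ≠ 0) (hirr : Irrational (u.2 / u.1)) :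
    Dense ((phi16 u).range : Set ℝ) := by
  rcases AddSubgroup.dense_or_cyclic (phi16 u).range with h | ⟨a, ha⟩
  · exact h
  · exfalso
    have hu1 : u.1 ∈ (phi16 u).range := ⟨(1, 0), by simp [phi16]⟩
    have hu2 : u.2 ∈ (phi16 u).range := ⟨(0, 1), by simp [phi16]⟩
    rw [ha, AddSubgroup.mem_closure_singleton] at hu1 hu2
    obtain ⟨n, hn⟩ := hu1
    obtain ⟨m, hm⟩ := hu2
    rw [zsmul_eq_mul] at hn hm
    have hn0 : (n : ℝ) ≠ 0 := by
      intro h; rw [h, zero_mul] at hn; exact h1 hn.symm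
    have ha0 : a ≠ 0 := by
      intro h; rw [h, mul_zero] at hn; exact h1 hn.symm
    apply hirr ⟨(m : ℚ) / (n : ℚ), ?_⟩
    push_cast
    rw [← hn, ← hm]
    field_simp

lemma M16_split (u : ℝ × ℝ) (h1 : u.1 ≠ 0) (hirr : Irrational (u.2 / u.1)) :
    ∀ w ∈ M16 u, w ≠ 0 →
      ∃ v : ℤ × ℤ, v ≠ 0 ∧ v ∈ M16 u ∧ w - v ∈ M16 u ∧ w - v ≠ 0 := by
  intro w hw hw0
  have hpos : 0 < phi16 u w :=
    lt_of_le_of_ne ((mem_M16_iff u w).1 hw) (Ne.symm (phi16_ne_zero u h1 hirr hw0))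
  have := (phi16_dense u h1 hirr) (phi16 u w / 2)
  rw [Metric.mem_closure_iff] at this
  obtain ⟨b, hb, hdist⟩ := this (phi16 u w / 2) (by linarith)
  obtain ⟨v, rfl⟩ := hb
  rw [Real.dist_eq, abs_lt] at hdist
  have hv1 : 0 < phi16 u v := by linarith
  have hv2 : 0 < phi16 u (w - v) := by
    rw [map_sub]; linarith
  refine ⟨v, ?_, le_of_lt hv1, le_of_lt hv2, ?_⟩
  · rintro rfl; simp at hv1
  · rintro h; rw [h] at hv2; simp at hv2

/-- For a unit vector u with irrational slope ratio, the monoid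
M = {v ∈ ℤ² : ⟨v,u⟩ ≥ 0} is reduced, is not a group, and is antimatter:
every nonzero element splits as a sum of two nonzero elements of M. -/
theorem M16_antimatter (u : ℝ × ℝ) (hunit : u.1 ^ 2 + u.2 ^ 2 = 1)
    (h1 : u.1 ≠ 0) (hirr : Irrational (u.2 / u.1)) :
    (∀ x ∈ M16 u, IsUnitIn (M16 u) x → x = 0) ∧
    (∃ x ∈ M16 u, ¬ IsUnitIn (M16 u) x) ∧
    (∀ a : ℤ × ℤ, ¬ IsAtomIn (M16 u) a) ∧
    (∀ w ∈ M16 u, w ≠ 0 →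
      ∃ v : ℤ × ℤ, v ≠ 0 ∧ v ∈ M16 u ∧ w - v ∈ M16 u ∧ w - v ≠ 0) := by
  have hred : ∀ x ∈ M16 u, IsUnitIn (M16 u) x → x = 0 := by
    intro x hx ⟨_, hnx⟩
    by_contra hx0
    have h1' := (mem_M16_iff u x).1 hx
    have h2' := (mem_M16_iff u (-x)).1 hnx
    rw [map_neg] at h2'
    exact phi16_ne_zero u h1 hirr hx0 (le_antisymm (by linarith) h1')
  have hnu : ∀ x : ℤ × ℤ, x ∈ M16 u → x ≠ 0 → ¬ IsUnitIn (M16 u) x := by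
    intro x hx hx0 hu
    exact hx0 (hred x hx hu)
  refine ⟨hred, ?_, ?_, M16_split u h1 hirr⟩
  · rcases lt_or_gt_of_ne h1 with h | h
    · refine ⟨(-1, 0), ?_, hnu _ ?_ (by simp)⟩
      · show (0:ℝ) ≤ ((-1:ℤ) : ℝ) * u.1 + ((0:ℤ) : ℝ) * u.2
        push_cast; linarith
      · show (0:ℝ) ≤ ((-1:ℤ) : ℝ) * u.1 + ((0:ℤ) : ℝ) * u.2
        push_cast; linarith
    · refine ⟨(1, 0), ?_, hnu _ ?_ (by simp)⟩
      · show (0:ℝ) ≤ ((1:ℤ) : ℝ) * u.1 + ((0:ℤ) : ℝ) * u.2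
        push_cast; linarith
      · show (0:ℝ) ≤ ((1:ℤ) : ℝ) * u.1 + ((0:ℤ) : ℝ) * u.2
        push_cast; linarith
  · rintro a ⟨haM, hanu, hsplit⟩
    have ha0 : a ≠ 0 := by
      rintro rfl
      exact hanu ⟨haM, by simpa using haM⟩
    obtain ⟨v, hv0, hvM, hwvM, hwv0⟩ := M16_split u h1 hirr a haM ha0
    rcases hsplit v (a - v) hvM hwvM (by ring) with h | h
    · exact hnu v hvM hv0 h
    · exact hnu _ hwvM hwv0 h
end

section
/- In any cancellative commutative monoid M, the set P of non-invertible elements that are not quasi-atomic, if nonempty, is a prime ideal of M containing no atoms. -/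
lemma quasi_of_unit {M : Type*} [AddCancelCommMonoid M] {r : M} (h : IsAddUnit r) :
    ∃ m : M, r + m ∈ Atomics M := by
  obtain ⟨t, ht⟩ := h.exists_neg
  exact ⟨t, by rw [ht]; exact (Atomics M).zero_mem⟩

/-- In any cancellative commutative monoid, the set of non-invertible
non-quasi-atomic elements, if nonempty, is a prime ideal containing no atoms. -/
theorem non_quasi_atomic_set_is_prime_ideal {M : Type*} [AddCancelCommMonoid M]
    (P : Set M)
    (hP : P = {x : M | ¬ IsAddUnit x ∧ ¬ ∃ m : M, x + m ∈ Atomics M})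
    (hne : P.Nonempty) :
    (∀ r ∈ P, ∀ s : M, r + s ∈ P) ∧
    P ≠ Set.univ ∧
    (∀ r s : M, r + s ∈ P → r ∈ P ∨ s ∈ P) ∧
    (∀ a ∈ P, ¬ IsAtomElem a) := by
  subst hP
  refine ⟨?_, ?_, ?_, ?_⟩
  · rintro r ⟨hr1, hr2⟩ s
    refine ⟨fun h => hr1 (isAddUnit_of_add_isAddUnit_left h), ?_⟩
    rintro ⟨m, hm⟩
    exact hr2 ⟨s + m, by rwa [← add_assoc]⟩
  · intro h
    have : (0 : M) ∈ {x : M | ¬ IsAddUnit x ∧ ¬ ∃ m : M, x + m ∈ Atomics M} := by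
      rw [h]; trivial
    exact this.1 isAddUnit_zero
  · intro r s hrs
    by_contra hc
    rw [not_or] at hc
    obtain ⟨hr, hs⟩ := hc
    have hq : ∀ x : M, ¬(¬ IsAddUnit x ∧ ¬ ∃ m : M, x + m ∈ Atomics M) →
        ∃ m : M, x + m ∈ Atomics M := by
      intro x hx
      by_cases hu : IsAddUnit x
      · exact quasi_of_unit hu
      · by_contra h'; exact hx ⟨hu, h'⟩
    obtain ⟨m1, hm1⟩ := hq r hr
    obtain ⟨m2, hm2⟩ := hq s hs
    exact hrs.2 ⟨m1 + m2, by
      have := (Atomics M).add_mem hm1 hm2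
      convert this using 1
      abel⟩
  · rintro a ⟨_, ha2⟩ hatom
    exact ha2 ⟨0, by rw [add_zero]; exact AddSubmonoid.subset_closure hatom⟩
end
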